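/- Let G_X be the graph constructed as follows: start with a bipartite graph on parts V = {v_1,…,v_r}, W = {w_1,…,w_r} given by 0/1 matrix X; fix indices I, J; add vertices a, b with edge a–b; add an edge from every vertex of V ∖ {v_I} to a and from every vertex of W ∖ {w_J} to a; add vertices u, y, u', y', z with edges u–u', y–y', u–z, y–z; add an edge from every vertex of V ∪ W ∪ {a, b} to each of u and y. If v_I w_J is an edge of the bipartite part (X_{I,J} = 1), then {u, u', y, y', a, v_I} is a Liar's dominating set of G_X of size 6. -/

import Mathlib

/-- Closed neighborhood of a vertex. -/
def closedNbr {V : Type*} (G : SimpleGraph V) (v : V) : Set V :=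
  insert v (G.neighborSet v)

/-- `D` is a `k`-tuple dominating set of `G`. -/
def IsKTupleDomSet {V : Type*} (G : SimpleGraph V) (k : ℕ) (D : Set V) : Prop :=
  ∀ v : V, k ≤ (closedNbr G v ∩ D).ncard

/-- `L` is a Liar's dominating set of `G`. -/
def IsLiarsDomSet {V : Type*} (G : SimpleGraph V) (L : Set V) : Prop :=
  (∀ v : V, 2 ≤ (closedNbr G v ∩ L).ncard) ∧
  (∀ u v : V, u ≠ v → 3 ≤ ((closedNbr G u ∪ closedNbr G v) ∩ L).ncard)
/-- Vertex type of the streaming lower-bound graph for LDS: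
the bipartite parts V and W, plus gadget vertices coded in `Fin 7`:
0 = a, 1 = b, 2 = u, 3 = y, 4 = u', 5 = y', 6 = z. -/
abbrev VtxL (r : ℕ) := (Fin r ⊕ Fin r) ⊕ Fin 7

/-- The base (asymmetric) edge relation of the graph G_X for the LDS lower bound. -/
def relL (r : ℕ) (X : Fin r → Fin r → Bool) (I J : Fin r) :
    VtxL r → VtxL r → Prop
  | Sum.inl (Sum.inl i), Sum.inl (Sum.inr j) => X i j = true
  | Sum.inl x, Sum.inr g =>
      (g = 2 ∨ g = 3) ∨
        (g = 0 ∧ (match x with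
          | Sum.inl i => i ≠ I
          | Sum.inr j => j ≠ J))
  | Sum.inr g, Sum.inr g' =>
      (g = 0 ∧ g' = 1) ∨ (g = 2 ∧ g' = 4) ∨ (g = 3 ∧ g' = 5) ∨
        (g = 2 ∧ g' = 6) ∨ (g = 3 ∧ g' = 6) ∨
        (g = 0 ∧ g' = 2) ∨ (g = 0 ∧ g' = 3) ∨ (g = 1 ∧ g' = 2) ∨ (g = 1 ∧ g' = 3)
  | _, _ => False

/-- The graph G_X of the LDS streaming lower bound. -/
def graphL (r : ℕ) (X : Fin r → Fin r → Bool) (I J : Fin r) : SimpleGraph (VtxL r) :=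
  SimpleGraph.fromRel (relL r X I J)

/-!
Both `u` and `y` are adjacent to every vertex of `V ∪ W ∪ {a, b}`, so such a vertex sees them in
the witness set together with a third witness: `v_I` itself for `v_I`, `v_I` again for `w_J` (this is
where `X I J = true` enters), and `a` for every other vertex, including `a` and `b`. The vertices
`u`, `y` see themselves, `a` and their pendant partner. Only `u'`, `y'` and `z` see just two witnesses, and any
two of them still see `u`, `y` and one of `u'`, `y'`.
-/

variable {V : Type*}

@[simp] lemma mem_closedNbr {G : SimpleGraph V} {v x : V} :
    x ∈ closedNbr G v ↔ x = v ∨ G.Adj v x :=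
  Iff.rfl

lemma isLiarsDomSet_of_three_le_outside {G : SimpleGraph V} {L : Set V} (hL : L.Finite)
    (E : Set V) (h3 : ∀ v ∉ E, 3 ≤ (closedNbr G v ∩ L).ncard)
    (h2 : ∀ v ∈ E, 2 ≤ (closedNbr G v ∩ L).ncard)
    (hE : ∀ u ∈ E, ∀ v ∈ E, u ≠ v → 3 ≤ ((closedNbr G u ∪ closedNbr G v) ∩ L).ncard) :
    IsLiarsDomSet G L := by
  refine ⟨fun v => ?_, fun u v huv => ?_⟩
  · by_cases hv : v ∈ E
    · exact h2 v hv
    · exact (h3 v hv).trans' (by omega)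
  have hmono : ∀ w ∈ ({u, v} : Set V),
      (closedNbr G w ∩ L).ncard ≤ ((closedNbr G u ∪ closedNbr G v) ∩ L).ncard := by
    rintro w (rfl | rfl)
    · exact Set.ncard_le_ncard (by gcongr; exact Set.subset_union_left) (hL.inter_of_right _)
    · exact Set.ncard_le_ncard (by gcongr; exact Set.subset_union_right) (hL.inter_of_right _)
  by_cases hu : u ∈ E
  · by_cases hv : v ∈ E
    · exact hE u hu v hv huv
    · exact (h3 v hv).trans (hmono v (by simp))
  · exact (h3 u hu).trans (hmono u (by simp))

section Gadget

variable {r : ℕ} {X : Fin r → Fin r → Bool} {I J : Fin r}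

abbrev ldsWitness (I : Fin r) : Set (VtxL r) :=
  {Sum.inr 2, Sum.inr 4, Sum.inr 3, Sum.inr 5, Sum.inr 0, Sum.inl (Sum.inl I)}

lemma ncard_ldsWitness (I : Fin r) : (ldsWitness I).ncard = 6 := by
  rw [Set.ncard_eq_toFinset_card']
  simp

lemma three_le_ncard_closedNbr_inter_ldsWitness (hX : X I J = true) (v : VtxL r)
    (hv : v ∉ ({Sum.inr 4, Sum.inr 5, Sum.inr 6} : Set (VtxL r))) :
    3 ≤ (closedNbr (graphL r X I J) v ∩ ldsWitness I).ncard := by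
  rw [Nat.succ_le_iff, Set.two_lt_ncard_iff]
  rcases v with ((i | j) | g)
  · by_cases hi : i = I
    · subst hi
      exact ⟨Sum.inr 2, Sum.inr 3, Sum.inl (Sum.inl i), by simp [graphL, relL]⟩
    · exact ⟨Sum.inr 2, Sum.inr 3, Sum.inr 0, by simp [graphL, relL, hi]⟩
  · by_cases hj : j = J
    · subst hj
      exact ⟨Sum.inr 2, Sum.inr 3, Sum.inl (Sum.inl I), by simp [graphL, relL, hX]⟩
    · exact ⟨Sum.inr 2, Sum.inr 3, Sum.inr 0, by simp [graphL, relL, hj]⟩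
  · fin_cases g
    · exact ⟨Sum.inr 2, Sum.inr 3, Sum.inr 0, by simp [graphL, relL]⟩
    · exact ⟨Sum.inr 2, Sum.inr 3, Sum.inr 0, by simp [graphL, relL]⟩
    · exact ⟨Sum.inr 2, Sum.inr 4, Sum.inr 0, by simp [graphL, relL]⟩
    · exact ⟨Sum.inr 3, Sum.inr 5, Sum.inr 0, by simp [graphL, relL]⟩
    all_goals simp at hv

lemma two_le_ncard_closedNbr_inter_ldsWitness (v : VtxL r)
    (hv : v ∈ ({Sum.inr 4, Sum.inr 5, Sum.inr 6} : Set (VtxL r))) :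
    2 ≤ (closedNbr (graphL r X I J) v ∩ ldsWitness I).ncard := by
  rw [Nat.succ_le_iff, Set.one_lt_ncard_iff]
  rcases hv with rfl | rfl | rfl
  · exact ⟨Sum.inr 4, Sum.inr 2, by simp [graphL, relL]⟩
  · exact ⟨Sum.inr 5, Sum.inr 3, by simp [graphL, relL]⟩
  · exact ⟨Sum.inr 2, Sum.inr 3, by simp [graphL, relL]⟩

lemma three_le_ncard_closedNbr_union_inter_ldsWitness
    (u : VtxL r) (hu : u ∈ ({Sum.inr 4, Sum.inr 5, Sum.inr 6} : Set (VtxL r)))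
    (v : VtxL r) (hv : v ∈ ({Sum.inr 4, Sum.inr 5, Sum.inr 6} : Set (VtxL r))) (huv : u ≠ v) :
    3 ≤ ((closedNbr (graphL r X I J) u ∪ closedNbr (graphL r X I J) v) ∩ ldsWitness I).ncard := by
  rw [Nat.succ_le_iff, Set.two_lt_ncard_iff]
  rcases hu with rfl | rfl | rfl <;> rcases hv with rfl | rfl | rfl <;>
    simp only [ne_eq, not_true_eq_false] at huv
  · exact ⟨Sum.inr 2, Sum.inr 3, Sum.inr 4, by simp [graphL, relL]⟩
  · exact ⟨Sum.inr 2, Sum.inr 3, Sum.inr 4, by simp [graphL, relL]⟩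
  · exact ⟨Sum.inr 2, Sum.inr 3, Sum.inr 4, by simp [graphL, relL]⟩
  · exact ⟨Sum.inr 2, Sum.inr 3, Sum.inr 5, by simp [graphL, relL]⟩
  · exact ⟨Sum.inr 2, Sum.inr 3, Sum.inr 4, by simp [graphL, relL]⟩
  · exact ⟨Sum.inr 2, Sum.inr 3, Sum.inr 5, by simp [graphL, relL]⟩

end Gadget

theorem lds_gadget_yes_instance (r : ℕ) (X : Fin r → Fin r → Bool) (I J : Fin r)
    (hX : X I J = true) :
    IsLiarsDomSet (graphL r X I J)
        ({Sum.inr 2, Sum.inr 4, Sum.inr 3, Sum.inr 5, Sum.inr 0,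
          Sum.inl (Sum.inl I)} : Set (VtxL r)) ∧
      ({Sum.inr 2, Sum.inr 4, Sum.inr 3, Sum.inr 5, Sum.inr 0,
          Sum.inl (Sum.inl I)} : Set (VtxL r)).ncard = 6 :=
  ⟨isLiarsDomSet_of_three_le_outside (L := ldsWitness I) (Set.toFinite _) _
      (three_le_ncard_closedNbr_inter_ldsWitness hX) two_le_ncard_closedNbr_inter_ldsWitness
      three_le_ncard_closedNbr_union_inter_ldsWitness,
    ncard_ldsWitness I⟩
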